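/- A knowledge base K over a finite alphabet is 1CNF-distributable with respect to the Hamming-distance sum-aggregation merging operator Δ^{H,Σ} if and only if K is 1CNF-expressible (i.e., its set of models is 1CNF-closed). -/

import Mathlib

def hamming {U : Type*} [DecidableEq U] (s t : Finset U) : ℕ := (s \ t ∪ t \ s).card

/-- A finite set of models is 1CNF-closed if closed under intersection,
union, and betweenness. -/
def oneCNFClosed {U : Type*} [DecidableEq U] (M : Finset (Finset U)) : Prop :=
  (∀ x ∈ M, ∀ y ∈ M, x ∩ y ∈ M) ∧ (∀ x ∈ M, ∀ y ∈ M, x ∪ y ∈ M) ∧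
  (∀ x ∈ M, ∀ y ∈ M, ∀ z : Finset U, x ⊆ z → z ⊆ y → z ∈ M)

/-- Hamming distance from an interpretation to a knowledge base (its model set). -/
noncomputable def distToKB {U : Type*} [DecidableEq U] (ω : Finset U) (M : Finset (Finset U)) : ℕ :=
  sInf {n : ℕ | ∃ τ ∈ M, n = hamming ω τ}

/-- Sum-aggregated Hamming distance of an interpretation to a profile. -/
noncomputable def aggSum {U : Type*} [DecidableEq U] (E : List (Finset (Finset U))) (ω : Finset U) : ℕ :=
  (E.map (distToKB ω)).sum

/-- `K` is 1CNF-distributable w.r.t. Δ^{H,Σ}: there are a nonempty profile of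
nonempty 1CNF knowledge bases and a 1CNF constraint whose merging has exactly
the models of `K`. -/
def oneCNFDistributable {U : Type*} [DecidableEq U] (K : Finset (Finset U)) : Prop :=
  ∃ (E : List (Finset (Finset U))) (μ : Finset (Finset U)),
    E ≠ [] ∧ (∀ M ∈ E, M.Nonempty ∧ oneCNFClosed M) ∧ oneCNFClosed μ ∧
    {ω : Finset U | ω ∈ μ ∧ ∀ ω' ∈ μ, aggSum E ω ≤ aggSum E ω'} = (↑K : Set (Finset U))

lemma hamming_eq_add {U : Type*} [DecidableEq U] (s t : Finset U) :
    hamming s t = (s \ t).card + (t \ s).card := by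
  unfold hamming
  exact Finset.card_union_of_disjoint disjoint_sdiff_sdiff

lemma distToKB_eq {U : Type*} [DecidableEq U] {M : Finset (Finset U)} (hne : M.Nonempty)
    (hc : oneCNFClosed M) (ω : Finset U) :
    distToKB ω M = ((M.inf' hne id) \ ω).card + (ω \ (M.sup' hne id)).card := by
  set P := M.inf' hne id with hPdef
  set Q := M.sup' hne id with hQdef
  have hP : P ∈ M := by
    apply Finset.inf'_mem (↑M : Set (Finset U))
    · intro x hx y hy; exact hc.1 x hx y hy
    · intro i hi; exact hi
  have hQ : Q ∈ M := by
    apply Finset.sup'_mem (↑M : Set (Finset U))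
    · intro x hx y hy; exact hc.2.1 x hx y hy
    · intro i hi; exact hi
  have hPQ : P ⊆ Q := Finset.le_sup' id hP
  have hproj : (ω ∩ Q) ∪ P ∈ M := by
    apply hc.2.2 P hP Q hQ
    · exact Finset.subset_union_right
    · intro u hu
      rcases Finset.mem_union.mp hu with h | h
      · exact (Finset.mem_inter.mp h).2
      · exact hPQ h
  have hsd1 : ω \ ((ω ∩ Q) ∪ P) = ω \ Q := by
    ext u
    simp only [Finset.mem_sdiff, Finset.mem_union, Finset.mem_inter]
    constructor
    · rintro ⟨h1, h2⟩; exact ⟨h1, fun hq => h2 (Or.inl ⟨h1, hq⟩)⟩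
    · rintro ⟨h1, h2⟩
      exact ⟨h1, fun h => by rcases h with ⟨_, hq⟩ | hp; exact h2 hq; exact h2 (hPQ hp)⟩
  have hsd2 : ((ω ∩ Q) ∪ P) \ ω = P \ ω := by
    ext u
    simp only [Finset.mem_sdiff, Finset.mem_union, Finset.mem_inter]
    constructor
    · rintro ⟨h1, h2⟩
      rcases h1 with ⟨hω, _⟩ | hp
      · exact absurd hω h2
      · exact ⟨hp, h2⟩
    · rintro ⟨h1, h2⟩; exact ⟨Or.inr h1, h2⟩
  apply le_antisymm
  · have : hamming ω ((ω ∩ Q) ∪ P) = (P \ ω).card + (ω \ Q).card := by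
      rw [hamming_eq_add, hsd1, hsd2, Nat.add_comm]
    exact this ▸ Nat.sInf_le ⟨_, hproj, rfl⟩
  · have hsetne : {n : ℕ | ∃ τ ∈ M, n = hamming ω τ}.Nonempty :=
      ⟨hamming ω P, P, hP, rfl⟩
    obtain ⟨τ, hτ, heq⟩ := Nat.sInf_mem hsetne
    unfold distToKB
    rw [heq, hamming_eq_add]
    have h1 : P \ ω ⊆ τ \ ω := Finset.sdiff_subset_sdiff (Finset.inf'_le id hτ) le_rfl
    have h2 : ω \ Q ⊆ ω \ τ := Finset.sdiff_subset_sdiff le_rfl (Finset.le_sup' id hτ)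
    have := Finset.card_le_card h1
    have := Finset.card_le_card h2
    omega

lemma distToKB_modular {U : Type*} [DecidableEq U] {M : Finset (Finset U)} (hne : M.Nonempty)
    (hc : oneCNFClosed M) (x y : Finset U) :
    distToKB (x ∩ y) M + distToKB (x ∪ y) M = distToKB x M + distToKB y M := by
  rw [distToKB_eq hne hc, distToKB_eq hne hc, distToKB_eq hne hc, distToKB_eq hne hc]
  set P := M.inf' hne id
  set Q := M.sup' hne id
  have e1 : P \ (x ∩ y) = (P \ x) ∪ (P \ y) := by
    ext u; simp only [Finset.mem_sdiff, Finset.mem_union, Finset.mem_inter]; tauto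
  have e2 : P \ (x ∪ y) = (P \ x) ∩ (P \ y) := by
    ext u; simp only [Finset.mem_sdiff, Finset.mem_union, Finset.mem_inter]; tauto
  have e3 : (x ∩ y) \ Q = (x \ Q) ∩ (y \ Q) := by
    ext u; simp only [Finset.mem_sdiff, Finset.mem_union, Finset.mem_inter]; tauto
  have e4 : (x ∪ y) \ Q = (x \ Q) ∪ (y \ Q) := by
    ext u; simp only [Finset.mem_sdiff, Finset.mem_union, Finset.mem_inter]; tauto
  rw [e1, e2, e3, e4]
  have c1 := Finset.card_union_add_card_inter (P \ x) (P \ y)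
  have c2 := Finset.card_union_add_card_inter (x \ Q) (y \ Q)
  omega

lemma aggSum_modular {U : Type*} [DecidableEq U] {E : List (Finset (Finset U))}
    (hE : ∀ M ∈ E, M.Nonempty ∧ oneCNFClosed M) (x y : Finset U) :
    aggSum E (x ∩ y) + aggSum E (x ∪ y) = aggSum E x + aggSum E y := by
  induction E with
  | nil => simp [aggSum]
  | cons M E ih =>
    have h := hE M List.mem_cons_self
    have := distToKB_modular h.1 h.2 x y
    have := ih (fun N hN => hE N (List.mem_cons_of_mem M hN))
    simp only [aggSum, List.map_cons, List.sum_cons] at *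
    omega

theorem stmt_6 {U : Type*} [DecidableEq U] [Fintype U] (K : Finset (Finset U)) :
    oneCNFDistributable K ↔ oneCNFClosed K := by
  constructor
  · rintro ⟨E, μ, hEne, hE, hμ, hset⟩
    have hmem : ∀ ω : Finset U, ω ∈ K ↔ ω ∈ μ ∧ ∀ ω' ∈ μ, aggSum E ω ≤ aggSum E ω' := by
      intro ω
      have h := Set.ext_iff.mp hset ω
      simp only [Set.mem_setOf_eq, Finset.mem_coe] at h
      exact h.symm
    refine ⟨?_, ?_, ?_⟩
    · intro a ha b hb
      obtain ⟨haμ, hamin⟩ := (hmem a).mp ha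
      obtain ⟨hbμ, hbmin⟩ := (hmem b).mp hb
      have hiμ : a ∩ b ∈ μ := hμ.1 a haμ b hbμ
      have huμ : a ∪ b ∈ μ := hμ.2.1 a haμ b hbμ
      have hmod := aggSum_modular hE a b
      have h1 := hamin _ hiμ
      have h2 := hamin _ huμ
      have h3 := hbmin _ haμ
      have h4 := hamin _ hbμ
      apply (hmem _).mpr
      refine ⟨hiμ, fun ω' hω' => ?_⟩
      have := hamin ω' hω'
      omega
    · intro a ha b hb
      obtain ⟨haμ, hamin⟩ := (hmem a).mp ha
      obtain ⟨hbμ, hbmin⟩ := (hmem b).mp hb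
      have hiμ : a ∩ b ∈ μ := hμ.1 a haμ b hbμ
      have huμ : a ∪ b ∈ μ := hμ.2.1 a haμ b hbμ
      have hmod := aggSum_modular hE a b
      have h1 := hamin _ hiμ
      have h2 := hamin _ huμ
      have h3 := hbmin _ haμ
      have h4 := hamin _ hbμ
      apply (hmem _).mpr
      refine ⟨huμ, fun ω' hω' => ?_⟩
      have := hamin ω' hω'
      omega
    · intro a ha b hb z haz hzb
      obtain ⟨haμ, hamin⟩ := (hmem a).mp ha
      obtain ⟨hbμ, hbmin⟩ := (hmem b).mp hb
      have hzμ : z ∈ μ := hμ.2.2 a haμ b hbμ z haz hzb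
      set w : Finset U := a ∪ (b \ z) with hw
      have hwμ : w ∈ μ := by
        apply hμ.2.2 a haμ b hbμ
        · exact Finset.subset_union_left
        · intro u hu
          rcases Finset.mem_union.mp hu with h | h
          · exact hzb (haz h)
          · exact (Finset.mem_sdiff.mp h).1
      have hzw1 : z ∩ w = a := by
        ext u
        simp only [hw, Finset.mem_inter, Finset.mem_union, Finset.mem_sdiff]
        constructor
        · rintro ⟨hz, ha' | ⟨_, hnz⟩⟩
          · exact ha'
          · exact absurd hz hnz
        · intro h; exact ⟨haz h, Or.inl h⟩
      have hzw2 : z ∪ w = b := by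
        ext u
        simp only [hw, Finset.mem_union, Finset.mem_sdiff]
        constructor
        · rintro (h | h | h)
          · exact hzb h
          · exact hzb (haz h)
          · exact h.1
        · intro h
          by_cases hz : u ∈ z
          · exact Or.inl hz
          · exact Or.inr (Or.inr ⟨h, hz⟩)
      have hmod := aggSum_modular hE z w
      rw [hzw1, hzw2] at hmod
      have h1 := hamin _ hzμ
      have h2 := hamin _ hwμ
      have h3 := hbmin _ haμ
      have h4 := hamin _ hbμ
      apply (hmem _).mpr
      refine ⟨hzμ, fun ω' hω' => ?_⟩
      have := hamin ω' hω'
      omega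
  · intro hK
    rcases K.eq_empty_or_nonempty with hKe | hKne
    · refine ⟨[{∅}], ∅, by simp, ?_, ?_, ?_⟩
      · intro M hM
        simp only [List.mem_singleton] at hM
        subst hM
        refine ⟨⟨∅, Finset.mem_singleton_self ∅⟩, ?_, ?_, ?_⟩
        · intro x hx y hy
          simp only [Finset.mem_singleton] at *
          subst hx; subst hy; simp
        · intro x hx y hy
          simp only [Finset.mem_singleton] at *
          subst hx; subst hy; simp
        · intro x hx y hy z hz1 hz2
          simp only [Finset.mem_singleton] at *
          subst hy
          exact Finset.subset_empty.mp hz2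
      · exact ⟨by simp, by simp, by simp⟩
      · subst hKe
        simp
    · refine ⟨[K], K, by simp, ?_, hK, ?_⟩
      · intro M hM
        simp only [List.mem_singleton] at hM
        subst hM
        exact ⟨hKne, hK⟩
      · have hzero : ∀ ω ∈ K, aggSum [K] ω = 0 := by
          intro ω hω
          simp only [aggSum, List.map_cons, List.map_nil, List.sum_cons, List.sum_nil,
            Nat.add_zero]
          have : (0 : ℕ) ∈ {n : ℕ | ∃ τ ∈ K, n = hamming ω τ} := by
            refine ⟨ω, hω, ?_⟩
            simp [hamming]
          exact Nat.le_zero.mp (Nat.sInf_le this)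
        ext ω
        simp only [Set.mem_setOf_eq, Finset.coe_mem, Finset.mem_coe]
        constructor
        · rintro ⟨h, _⟩; exact h
        · intro h
          refine ⟨h, fun ω' _ => ?_⟩
          rw [hzero ω h]
          exact Nat.zero_le _
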